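/- arXiv:1310.5032 — 10 statements merged into one kernel-verified Lean document; each statement's English description precedes it below -/
import Mathlib

section
/- For every finite automaton 𝒜 on Σ and every acceptance condition cond = (c,R) with c ∈ {run, inf, fin, ninf} and R ∈ {⊓, ⊆, =}, the ω-language L_cond(𝒜) accepted by 𝒜 under cond is ω-rational. -/
/-!
Whether a path is accepted under `(c, R)` depends only on its run set and its inf set. An ω-word
has an initial path with run set `S ∪ I` and inf set `I` iff it factors as `u₀u₁u₂⋯`, where `u₀`
labels a walk from `q₀` to some `q` entering exactly the states of `S` and every later `uᵢ`
labels a walk from `q` to `q` entering exactly the states of `I`: to cut a path, wait until only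
states of `I` occur, and cut at visits of `q` between which every state of `I` has been visited.
Each of these walk languages is recognised by the subset construction on `Q × 𝒫(Q)`, and there
are only finitely many triples `(S, I, q)`.
-/

open Set

/-- A finite automaton used for recognizing ω-words over the alphabet `A`:
a finite type of states, a transition relation, an initial state and an
acceptance table (a set of sets of states). -/
structure OFA (A : Type) : Type 1 where
  Q : Type
  [finQ : Finite Q]
  T : Q → A → Q → Prop
  q0 : Q
  Acc : Set (Set Q)

attribute [instance] OFA.finQ

namespace OFA

variable {A : Type}

/-- Deterministic automaton: at most one successor per state and letter. -/
def Deterministic (M : OFA A) : Prop :=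
  ∀ p a q q', M.T p a q → M.T p a q' → q = q'

/-- Complete automaton: at least one successor per state and letter. -/
def Complete (M : OFA A) : Prop :=
  ∀ p a, ∃ q, M.T p a q

/-- `p` is an initial infinite path of `M` with label `x`. -/
def InitPath (M : OFA A) (p : ℕ → M.Q) (x : ℕ → A) : Prop :=
  p 0 = M.q0 ∧ ∀ i, M.T (p i) (x i) (p (i + 1))

/-- States visited at least once (at a positive index). -/
def runSet (M : OFA A) (p : ℕ → M.Q) : Set M.Q := {q | ∃ i, 0 < i ∧ p i = q}

/-- States visited infinitely often. -/
def infSet (M : OFA A) (p : ℕ → M.Q) : Set M.Q := {q | ∀ n, ∃ i, n ≤ i ∧ p i = q}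

/-- States visited finitely many times but at least once. -/
def finSet (M : OFA A) (p : ℕ → M.Q) : Set M.Q := M.runSet p \ M.infSet p

/-- States visited finitely many times or never. -/
def ninfSet (M : OFA A) (p : ℕ → M.Q) : Set M.Q := (M.infSet p)ᶜ

end OFA

/-- Selector for the set of states associated to a path. -/
inductive CSel | run | inf | fin | ninf

/-- Selector for the comparison relation with a member of the acceptance table. -/
inductive RSel | meet | sub | eq

def OFA.csel {A : Type} (M : OFA A) : CSel → (ℕ → M.Q) → Set M.Q
  | .run => M.runSet
  | .inf => M.infSet
  | .fin => M.finSet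
  | .ninf => M.ninfSet

def RSel.holds {Q : Type} : RSel → Set Q → Set Q → Prop
  | .meet => fun S F => (S ∩ F).Nonempty
  | .sub => fun S F => S ⊆ F
  | .eq => fun S F => S = F

/-- The ω-language accepted by `M` under the condition `(c, r)`. -/
def OFA.Lang {A : Type} (M : OFA A) (c : CSel) (r : RSel) : Set (ℕ → A) :=
  {x | ∃ p, M.InitPath p x ∧ ∃ F ∈ M.Acc, RSel.holds r (M.csel c p) F}

/-- The ω-language accepted by `M` under the condition 𝔸 : some `F ∈ Acc` with `F ⊆ run p`. -/
def OFA.LangA {A : Type} (M : OFA A) : Set (ℕ → A) :=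
  {x | ∃ p, M.InitPath p x ∧ ∃ F ∈ M.Acc, F ⊆ M.runSet p}

/-- The ω-language accepted by `M` under the condition 𝔸' : some `F ∈ Acc` with `F ⊈ run p`. -/
def OFA.LangA' {A : Type} (M : OFA A) : Set (ℕ → A) :=
  {x | ∃ p, M.InitPath p x ∧ ∃ F ∈ M.Acc, ¬ F ⊆ M.runSet p}

/-- The ω-language accepted by `M` under the condition 𝕃 : some `F ∈ Acc` with `F ⊆ inf p`. -/
def OFA.LangL {A : Type} (M : OFA A) : Set (ℕ → A) :=
  {x | ∃ p, M.InitPath p x ∧ ∃ F ∈ M.Acc, F ⊆ M.infSet p}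

/-- The ω-language accepted by `M` under the condition 𝕃' : some `F ∈ Acc` with `F ⊈ inf p`. -/
def OFA.LangL' {A : Type} (M : OFA A) : Set (ℕ → A) :=
  {x | ∃ p, M.InitPath p x ∧ ∃ F ∈ M.Acc, ¬ F ⊆ M.infSet p}

/-- The class of ω-languages of the form `L M` for automata `M` satisfying `P`. -/
def AutClass (A : Type) (P : OFA A → Prop) (L : (M : OFA A) → Set (ℕ → A)) :
    Set (Set (ℕ → A)) :=
  {X | ∃ M : OFA A, P M ∧ L M = X}

/-- The finite factor `x_i x_{i+1} … x_{j-1}` of the ω-word `x`. -/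
def extract {A : Type} (x : ℕ → A) (i j : ℕ) : List A :=
  (List.range (j - i)).map fun k => x (i + k)

/-- The ω-language `V · U^ω`: ω-words of the form `u₀u₁u₂⋯` with `u₀ ∈ V`
and all `uᵢ` (i ≥ 1) nonempty words of `U`, described via cut points. -/
def omegaPiece {A : Type} (V U : Language A) : Set (ℕ → A) :=
  {x | ∃ c : ℕ → ℕ, (∀ i, c i < c (i + 1)) ∧
    extract x 0 (c 0) ∈ V ∧ ∀ i, extract x (c i) (c (i + 1)) ∈ U}

/-- An ω-language is ω-rational if it is a finite union `⋃ᵢ Vᵢ · Uᵢ^ω`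
with all `Vᵢ`, `Uᵢ` rational (regular) languages of finite words. -/
def IsOmegaRat {A : Type} (L : Set (ℕ → A)) : Prop :=
  ∃ (n : ℕ) (V U : Fin n → Language A),
    (∀ i, (V i).IsRegular) ∧ (∀ i, (U i).IsRegular) ∧
    L = ⋃ i, omegaPiece (V i) (U i)

/-- Countable union of closed sets. -/
def IsFsigmaSet {X : Type*} [TopologicalSpace X] (S : Set X) : Prop :=
  ∃ f : ℕ → Set X, (∀ n, IsClosed (f n)) ∧ S = ⋃ n, f n

/-- Countable intersection of open sets. -/
def IsGdeltaSet {X : Type*} [TopologicalSpace X] (S : Set X) : Prop :=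
  ∃ f : ℕ → Set X, (∀ n, IsOpen (f n)) ∧ S = ⋂ n, f n

theorem extract_self {A : Type} (x : ℕ → A) (i : ℕ) : extract x i i = [] := by
  simp [extract]

theorem extract_succ {A : Type} (x : ℕ → A) {i j : ℕ} (hij : i ≤ j) :
    extract x i (j + 1) = extract x i j ++ [x j] := by
  rw [extract, extract, Nat.sub_add_comm hij, List.range_succ, List.map_append]
  simp [Nat.add_sub_cancel' hij]

section Walks

variable {A Q : Type} (T : Q → A → Q → Prop)

/-- The NFA on `Q × Set Q` that follows `T` from `p` while recording the states entered so far;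
it accepts when it is in `q` having entered exactly the states of `S`. -/
def walkNFA (p q : Q) (S : Set Q) : NFA A (Q × Set Q) where
  step s a := {t | T s.1 a t.1 ∧ t.2 = insert t.1 s.2}
  start := {(p, ∅)}
  accept := {(q, S)}

def walkLang (p q : Q) (S : Set Q) : Language A := (walkNFA T p q S).accepts

variable {T}

theorem mem_eval_extract_walkNFA_iff {p q : Q} {S : Set Q} {x : ℕ → A} {i j : ℕ} (hij : i ≤ j)
    {r : Q} {R : Set Q} :
    (r, R) ∈ (walkNFA T p q S).eval (extract x i j) ↔ ∃ f : ℕ → Q, f i = p ∧ f j = r ∧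
      (∀ k ∈ Ico i j, T (f k) (x k) (f (k + 1))) ∧ f '' Ioc i j = R := by
  induction j, hij using Nat.le_induction generalizing r R with
  | base =>
    simp only [extract_self, NFA.eval_nil, Ico_self, Ioc_self, image_empty]
    refine ⟨?_, ?_⟩
    · rintro ⟨⟩
      exact ⟨fun _ => p, rfl, rfl, by simp, rfl⟩
    · rintro ⟨f, rfl, rfl, -, rfl⟩
      rfl
  | succ j hij ih =>
    rw [extract_succ x hij, NFA.eval_append_singleton, NFA.mem_stepSet]
    constructor
    · rintro ⟨⟨r', R'⟩, hr', htr, hR : R = insert r R'⟩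
      subst hR
      obtain ⟨f, hfi, hfj, hfT, rfl⟩ := ih.1 hr'
      refine ⟨fun n => if n ≤ j then f n else r, by simp [hfi, hij], by simp, ?_, ?_⟩
      · intro k ⟨hik, hkj⟩
        rcases Nat.lt_succ_iff_lt_or_eq.1 hkj with hkj | rfl
        · simpa [hkj.le, Nat.succ_le_of_lt hkj] using hfT k ⟨hik, hkj⟩
        · simpa [hfj] using htr
      · rw [← insert_Ioc_right_eq_Ioc_add_one hij, image_insert_eq]
        congr 1
        · exact if_neg (by omega)
        · exact EqOn.image_eq fun n hn => if_pos hn.2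
    · rintro ⟨f, hfi, hfj, hfT, rfl⟩
      have hwalk : ∀ k ∈ Ico i j, T (f k) (x k) (f (k + 1)) :=
        fun k hk => hfT k ⟨hk.1, hk.2.trans j.lt_succ_self⟩
      refine ⟨(f j, f '' Ioc i j), ih.2 ⟨f, hfi, rfl, hwalk, rfl⟩,
        hfj ▸ hfT j ⟨hij, j.lt_succ_self⟩, ?_⟩
      rw [← insert_Ioc_right_eq_Ioc_add_one hij, image_insert_eq, hfj]

theorem extract_mem_walkLang_iff {p q : Q} {S : Set Q} {x : ℕ → A} {i j : ℕ} (hij : i ≤ j) :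
    extract x i j ∈ walkLang T p q S ↔ ∃ f : ℕ → Q, f i = p ∧ f j = q ∧
      (∀ k ∈ Ico i j, T (f k) (x k) (f (k + 1))) ∧ f '' Ioc i j = S := by
  rw [walkLang, NFA.mem_accepts]
  simp only [walkNFA, mem_singleton_iff, exists_eq_left]
  exact mem_eval_extract_walkNFA_iff hij

theorem walkLang_isRegular [Finite Q] (p q : Q) (S : Set Q) : (walkLang T p q S).IsRegular :=
  have : Fintype (Set (Q × Set Q)) := Fintype.ofFinite _
  ⟨_, this, (walkNFA T p q S).toDFA, NFA.toDFA_correct⟩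

end Walks

section Segments

variable {c : ℕ → ℕ}

theorem StrictMono.iUnion_Ioc_eq_Ioi (hc : StrictMono c) :
    ⋃ i, Ioc (c i) (c (i + 1)) = Ioi (c 0) := by
  simpa using iUnion_Ioc_map_succ_eq_Ioi (fun i => hc.monotone (Nat.zero_le i))
    hc.not_bddAbove_range_of_wellFoundedLT

theorem StrictMono.iUnion_Ico_eq_Ici (hc : StrictMono c) :
    ⋃ i, Ico (c i) (c (i + 1)) = Ici (c 0) := by
  simpa using iUnion_Ico_map_succ_eq_Ici (fun i => hc.monotone (Nat.zero_le i))
    hc.not_bddAbove_range_of_wellFoundedLT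

theorem StrictMono.eq_of_mem_Ioc (hc : StrictMono c) {i j k : ℕ}
    (hi : k ∈ Ioc (c i) (c (i + 1))) (hj : k ∈ Ioc (c j) (c (j + 1))) : i = j := by
  by_contra hne
  rcases Nat.lt_or_gt_of_ne hne with h | h
  · exact (hi.2.trans (hc.monotone h)).not_gt hj.1
  · exact (hj.2.trans (hc.monotone h)).not_gt hi.1

theorem StrictMono.exists_eqOn_Icc {Q : Type*} (hc : StrictMono c) (g₀ : ℕ → Q)
    (g : ℕ → ℕ → Q) (h₀ : g₀ (c 0) = g 0 (c 0))
    (hg : ∀ i, g i (c (i + 1)) = g (i + 1) (c (i + 1))) :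
    ∃ P : ℕ → Q, EqOn P g₀ (Iic (c 0)) ∧ ∀ i, EqOn P (g i) (Icc (c i) (c (i + 1))) := by
  have hseg (k : ℕ) (hk : c 0 < k) : ∃ i, k ∈ Ioc (c i) (c (i + 1)) := by
    rwa [← mem_Ioi, ← hc.iUnion_Ioc_eq_Ioi, mem_iUnion] at hk
  choose! seg hseg using hseg
  refine ⟨fun k => if k ≤ c 0 then g₀ k else g (seg k) k, fun k hk => if_pos hk, fun i k hk => ?_⟩
  dsimp only
  split_ifs with hk0
  · obtain rfl : i = 0 := Nat.le_zero.1 (hc.le_iff_le.1 (hk.1.trans hk0))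
    rw [le_antisymm hk0 hk.1, h₀]
  · have hk0 := not_le.1 hk0
    rcases hk.1.lt_or_eq with hlt | rfl
    · rw [hc.eq_of_mem_Ioc (hseg k hk0) ⟨hlt, hk.2⟩]
    · obtain ⟨i, rfl⟩ := Nat.exists_eq_succ_of_ne_zero (n := i) (by rintro rfl; exact hk0.false)
      rw [hc.eq_of_mem_Ioc (hseg _ hk0) ⟨hc i.lt_succ_self, le_rfl⟩, hg]

end Segments

def CSel.apply {Q : Type} : CSel → Set Q → Set Q → Set Q
  | .run => fun R _ => R
  | .inf => fun _ I => I
  | .fin => fun R I => R \ I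
  | .ninf => fun _ I => Iᶜ

namespace OFA

open Filter

variable {A : Type} (M : OFA A)

theorem csel_eq_apply (c : CSel) (p : ℕ → M.Q) :
    M.csel c p = c.apply (M.runSet p) (M.infSet p) := by
  cases c <;> rfl

theorem runSet_eq_image (p : ℕ → M.Q) : M.runSet p = p '' Ioi 0 := rfl

theorem mem_infSet_iff_frequently {p : ℕ → M.Q} {s : M.Q} :
    s ∈ M.infSet p ↔ ∃ᶠ n in atTop, p n = s :=
  frequently_atTop.symm

theorem eventually_mem_infSet (p : ℕ → M.Q) : ∀ᶠ n in atTop, p n ∈ M.infSet p := by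
  have : ∀ᶠ n in atTop, ∀ s ∈ (M.infSet p)ᶜ, p n ≠ s :=
    (eventually_all_finite (toFinite _)).2 fun s hs =>
      not_frequently.1 (M.mem_infSet_iff_frequently.not.1 hs)
  exact this.mono fun n h => by_contra fun h' => h _ h' rfl

theorem image_Ioi_eq_infSet {p : ℕ → M.Q} {N₀ N : ℕ} (hN₀ : ∀ n ≥ N₀, p n ∈ M.infSet p)
    (hN : N₀ ≤ N) : p '' Ioi N = M.infSet p := by
  refine Subset.antisymm (image_subset_iff.2 fun k hk => hN₀ k (hN.trans hk.le)) fun s hs => ?_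
  obtain ⟨k, hk, rfl⟩ := hs (N + 1)
  exact mem_image_of_mem p hk

theorem exists_return_visiting_infSet {p : ℕ → M.Q} {q : M.Q} (hq : q ∈ M.infSet p) (n : ℕ) :
    ∃ m, n < m ∧ p m = q ∧ M.infSet p ⊆ p '' Ioc n m := by
  have hvisit : ∀ᶠ m in atTop, ∀ s ∈ M.infSet p, s ∈ p '' Ioc n m :=
    (eventually_all_finite (toFinite _)).2 fun s hs => by
      obtain ⟨k, hk, rfl⟩ := hs (n + 1)
      exact eventually_atTop.2 ⟨k, fun m hm => mem_image_of_mem p ⟨hk, hm⟩⟩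
  obtain ⟨m, ⟨hvm, hnm⟩, hpm⟩ :=
    ((hvisit.and (eventually_gt_atTop n)).and_frequently (M.mem_infSet_iff_frequently.1 hq)).exists
  exact ⟨m, hnm, hpm, hvm⟩

theorem exists_mem_omegaPiece_of_initPath {p : ℕ → M.Q} {x : ℕ → A} (hp : M.InitPath p x) :
    ∃ S q, S ∪ M.infSet p = M.runSet p ∧
      x ∈ omegaPiece (walkLang M.T M.q0 q S) (walkLang M.T q q (M.infSet p)) := by
  obtain ⟨N₀, hN₀⟩ := eventually_atTop.1 (M.eventually_mem_infSet p)
  choose next hnext using M.exists_return_visiting_infSet (hN₀ N₀ le_rfl)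
  set c : ℕ → ℕ := fun i => next^[i + 1] N₀
  have hc_succ (i : ℕ) : c (i + 1) = next (c i) := Function.iterate_succ_apply' next (i + 1) N₀
  have hc (i : ℕ) : c i < c (i + 1) := hc_succ i ▸ (hnext (c i)).1
  have hpc (i : ℕ) : p (c i) = p N₀ := by
    cases i with
    | zero => exact (hnext N₀).2.1
    | succ i => rw [hc_succ]; exact (hnext _).2.1
  have hN₀c (i : ℕ) : N₀ ≤ c i :=
    (hnext N₀).1.le.trans ((strictMono_nat_of_lt_succ hc).monotone (Nat.zero_le i))
  refine ⟨p '' Ioc 0 (c 0), p N₀, ?_, c, hc, ?_, fun i => ?_⟩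
  · rw [runSet_eq_image, ← Ioc_union_Ioi_eq_Ioi (Nat.zero_le (c 0)), image_union,
      M.image_Ioi_eq_infSet hN₀ (hN₀c 0)]
  · exact (extract_mem_walkLang_iff (Nat.zero_le _)).2 ⟨p, hp.1, hpc 0, fun k _ => hp.2 k, rfl⟩
  · refine (extract_mem_walkLang_iff (hc i).le).2 ⟨p, hpc i, hpc (i + 1), fun k _ => hp.2 k, ?_⟩
    exact Subset.antisymm
      ((image_mono Ioc_subset_Ioi_self).trans (M.image_Ioi_eq_infSet hN₀ (hN₀c i)).le)
      (hc_succ i ▸ (hnext (c i)).2.2)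

theorem exists_initPath_of_mem_omegaPiece {x : ℕ → A} {S I : Set M.Q} {q : M.Q}
    (hx : x ∈ omegaPiece (walkLang M.T M.q0 q S) (walkLang M.T q q I)) :
    ∃ p, M.InitPath p x ∧ M.runSet p = S ∪ I ∧ M.infSet p = I := by
  obtain ⟨c, hc_succ, h₀, hseg⟩ := hx
  have hc : StrictMono c := strictMono_nat_of_lt_succ hc_succ
  obtain ⟨g₀, hg₀0, hg₀c, hg₀T, hg₀S⟩ := (extract_mem_walkLang_iff (Nat.zero_le _)).1 h₀
  choose g hgs hge hgT hgI using fun i => (extract_mem_walkLang_iff (hc_succ i).le).1 (hseg i)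
  obtain ⟨p, hp₀, hp⟩ := hc.exists_eqOn_Icc g₀ g (hg₀c.trans (hgs 0).symm)
    fun i => (hge i).trans (hgs (i + 1)).symm
  have himg₀ : p '' Ioc 0 (c 0) = S := (hp₀.mono Ioc_subset_Iic_self).image_eq.trans hg₀S
  have himg (i : ℕ) : p '' Ioc (c i) (c (i + 1)) = I :=
    ((hp i).mono Ioc_subset_Icc_self).image_eq.trans (hgI i)
  have htail : p '' Ioi (c 0) = I := by
    rw [← hc.iUnion_Ioc_eq_Ioi, image_iUnion]
    simp only [himg, iUnion_const]
  refine ⟨p, ⟨?_, fun k => ?_⟩, ?_, ?_⟩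
  · rw [hp₀ (Nat.zero_le _), hg₀0]
  · rcases lt_or_ge k (c 0) with hk | hk
    · rw [hp₀ hk.le, hp₀ (Nat.succ_le_of_lt hk)]
      exact hg₀T k ⟨Nat.zero_le k, hk⟩
    · rw [← mem_Ici, ← hc.iUnion_Ico_eq_Ici, mem_iUnion] at hk
      obtain ⟨i, hki, hki'⟩ := hk
      rw [hp i ⟨hki, hki'.le⟩, hp i ⟨hki.trans k.le_succ, hki'⟩]
      exact hgT i k ⟨hki, hki'⟩
  · rw [runSet_eq_image, ← Ioc_union_Ioi_eq_Ioi (Nat.zero_le (c 0)), image_union, himg₀, htail]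
  · refine Subset.antisymm (fun s hs => ?_) (fun s hs n => ?_)
    · obtain ⟨k, hk, rfl⟩ := hs (c 0 + 1)
      exact htail ▸ mem_image_of_mem p hk
    · rw [← himg n] at hs
      obtain ⟨k, hk, rfl⟩ := hs
      exact ⟨k, (hc.id_le n).trans hk.1.le, rfl⟩

theorem mem_lang_iff {c : CSel} {r : RSel} {x : ℕ → A} :
    x ∈ M.Lang c r ↔ ∃ S I q, (∃ F ∈ M.Acc, r.holds (c.apply (S ∪ I) I) F) ∧
      x ∈ omegaPiece (walkLang M.T M.q0 q S) (walkLang M.T q q I) := by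
  constructor
  · rintro ⟨p, hp, F, hF, hold⟩
    obtain ⟨S, q, hSI, hx⟩ := M.exists_mem_omegaPiece_of_initPath hp
    refine ⟨S, M.infSet p, q, ⟨F, hF, ?_⟩, hx⟩
    rwa [hSI, ← csel_eq_apply]
  · rintro ⟨S, I, q, ⟨F, hF, hold⟩, hx⟩
    obtain ⟨p, hp, hrun, hinf⟩ := M.exists_initPath_of_mem_omegaPiece hx
    exact ⟨p, hp, F, hF, by rwa [csel_eq_apply, hrun, hinf]⟩

end OFA

theorem isOmegaRat_biUnion {A : Type} {ι : Type*} {s : Set ι} (hs : s.Finite) {V U : ι → Language A}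
    (hV : ∀ i, (V i).IsRegular) (hU : ∀ i, (U i).IsRegular) :
    IsOmegaRat (⋃ i ∈ s, omegaPiece (V i) (U i)) := by
  have := hs.to_subtype
  let e := Finite.equivFin s
  refine ⟨Nat.card s, fun j => V (e.symm j), fun j => U (e.symm j), fun _ => hV _, fun _ => hU _,
    ?_⟩
  rw [biUnion_eq_iUnion]
  exact (e.symm.surjective.iUnion_comp fun i : s => omegaPiece (V i) (U i)).symm

theorem stmt_0_general (A : Type) (M : OFA A) (c : CSel) (r : RSel) :
    IsOmegaRat (M.Lang c r) := by
  let good : Set (Set M.Q × Set M.Q × M.Q) :=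
    {t | ∃ F ∈ M.Acc, r.holds (c.apply (t.1 ∪ t.2.1) t.2.1) F}
  have hL : M.Lang c r =
      ⋃ t ∈ good, omegaPiece (walkLang M.T M.q0 t.2.2 t.1) (walkLang M.T t.2.2 t.2.2 t.2.1) := by
    ext x
    simp only [M.mem_lang_iff, mem_iUnion, Prod.exists, good, mem_ofPred_eq, exists_prop]
  rw [hL]
  exact isOmegaRat_biUnion (toFinite good) (fun _ => walkLang_isRegular ..)
    (fun _ => walkLang_isRegular ..)

theorem stmt_0 (A : Type) [Fintype A] (M : OFA A) (c : CSel) (r : RSel) :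
    IsOmegaRat (M.Lang c r) :=
  stmt_0_general A M c r
end

section
/- FA(𝔸) ⊆ FA(run,⊓), DFA(𝔸) ⊆ DFA(run,⊓), CFA(𝔸) ⊆ CFA(run,⊓), and CDFA(𝔸) ⊆ CDFA(run,⊓). -/
open Set

namespace OFA

variable {A : Type}

/-- Subset-tracking automaton: records the set of states visited so far. -/
def track (M : OFA A) : OFA A where
  Q := M.Q × Set M.Q
  T := fun p a q => M.T p.1 a q.1 ∧ q.2 = p.2 ∪ {q.1}
  q0 := (M.q0, ∅)
  Acc := {{s : M.Q × Set M.Q | ∃ F ∈ M.Acc, F ⊆ s.2}}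

lemma track_det {M : OFA A} (h : M.Deterministic) : M.track.Deterministic := by
  rintro p a q q' ⟨h1, h2⟩ ⟨h1', h2'⟩
  have := h p.1 a q.1 q'.1 h1 h1'
  have : q.1 = q'.1 := this
  exact Prod.ext this (by rw [h2, h2', this])

lemma track_comp {M : OFA A} (h : M.Complete) : M.track.Complete := by
  rintro ⟨p, S⟩ a
  obtain ⟨q, hq⟩ := h p a
  exact ⟨(q, S ∪ {q}), hq, rfl⟩

lemma track_lang (M : OFA A) : M.track.Lang CSel.run RSel.meet = M.LangA := by
  ext x
  constructor
  · rintro ⟨p', ⟨h0, hT⟩, F', hF', hmeet⟩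
    have hF'eq : F' = {s : M.Q × Set M.Q | ∃ F ∈ M.Acc, F ⊆ s.2} := hF'
    set p : ℕ → M.Q := fun i => (p' i).1 with hp
    have hsub : ∀ i, (p' i).2 ⊆ M.runSet p := by
      intro i
      induction i with
      | zero => rw [h0]; exact fun q hq => absurd hq (Set.notMem_empty q)
      | succ n ih =>
        rw [(hT n).2]
        rintro q (hq | hq)
        · exact ih hq
        · exact ⟨n + 1, Nat.succ_pos n, hq.symm⟩
    obtain ⟨s, hs1, hs2⟩ := hmeet
    rw [hF'eq] at hs2
    obtain ⟨F, hF, hFs⟩ := hs2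
    obtain ⟨i, hi, rfl⟩ := hs1
    exact ⟨p, ⟨by show (p' 0).1 = M.q0; rw [h0]; rfl, fun i => (hT i).1⟩, F, hF,
      fun q hq => hsub i (hFs hq)⟩
  · rintro ⟨p, ⟨h0, hT⟩, F, hF, hFrun⟩
    set S : ℕ → Set M.Q := fun n => Nat.rec ∅ (fun k Sk => Sk ∪ {p (k + 1)}) n with hS
    have hSsucc : ∀ n, S (n + 1) = S n ∪ {p (n + 1)} := fun n => rfl
    have hmono : ∀ i j, i ≤ j → S i ⊆ S j := by
      intro i j hij
      induction j with
      | zero => simp_all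
      | succ n ih =>
        rcases Nat.lt_or_ge i (n + 1) with h | h
        · exact (ih (Nat.lt_succ_iff.mp h)).trans (by rw [hSsucc]; exact Set.subset_union_left)
        · have : i = n + 1 := le_antisymm hij h
          rw [this]
    have hrun : ∀ q ∈ M.runSet p, ∃ j, q ∈ S j := by
      rintro q ⟨j, hj, rfl⟩
      obtain ⟨k, rfl⟩ := Nat.exists_eq_add_of_lt hj
      exact ⟨0 + k + 1, by rw [hSsucc]; exact Or.inr rfl⟩
    have hFfin : F.Finite := Set.toFinite F
    classical
    have hFS : ∃ i, F ⊆ S i := by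
      set g : M.Q → ℕ := fun q => if h : ∃ j, q ∈ S j then h.choose else 0 with hg
      refine ⟨hFfin.toFinset.sup g, fun q hq => ?_⟩
      have hex : ∃ j, q ∈ S j := hrun q (hFrun hq)
      have h1 : q ∈ S (g q) := by rw [hg]; simp only [hex, dif_pos]; exact hex.choose_spec
      exact hmono (g q) _ (Finset.le_sup (hFfin.mem_toFinset.mpr hq)) h1
    obtain ⟨i, hi⟩ := hFS
    refine ⟨fun n => (p n, S n), ⟨Prod.ext h0 rfl, fun n => ⟨hT n, hSsucc n⟩⟩,
      _, rfl, (p (max i 1), S (max i 1)), ⟨max i 1, lt_of_lt_of_le one_pos (le_max_right i 1), rfl⟩,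
      F, hF, fun q hq => hmono i _ (le_max_left i 1) (hi hq)⟩

end OFA

theorem stmt_1 (A : Type) [Fintype A] :
    AutClass A (fun _ : OFA A => True) OFA.LangA ⊆ AutClass A (fun _ : OFA A => True) (fun M => M.Lang CSel.run RSel.meet) ∧
    AutClass A OFA.Deterministic OFA.LangA ⊆ AutClass A OFA.Deterministic (fun M => M.Lang CSel.run RSel.meet) ∧
    AutClass A OFA.Complete OFA.LangA ⊆ AutClass A OFA.Complete (fun M => M.Lang CSel.run RSel.meet) ∧
    AutClass A (fun M : OFA A => M.Deterministic ∧ M.Complete) OFA.LangA ⊆ AutClass A (fun M : OFA A => M.Deterministic ∧ M.Complete) (fun M => M.Lang CSel.run RSel.meet) := by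
  refine ⟨?_, ?_, ?_, ?_⟩ <;> rintro X ⟨M, hM, rfl⟩
  · exact ⟨M.track, trivial, M.track_lang⟩
  · exact ⟨M.track, OFA.track_det hM, M.track_lang⟩
  · exact ⟨M.track, OFA.track_comp hM, M.track_lang⟩
  · exact ⟨M.track, ⟨OFA.track_det hM.1, OFA.track_comp hM.2⟩, M.track_lang⟩
end

section
/- FA(run,⊓) ⊆ FA(𝔸), DFA(run,⊓) ⊆ DFA(𝔸), CFA(run,⊓) ⊆ CFA(𝔸), and CDFA(run,⊓) ⊆ CDFA(𝔸). -/
open Set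

/-! Meeting `run p` is the same as containing a singleton `{q}` with `q` in some `F ∈ Acc`.
Replacing the acceptance table by these singletons leaves the transitions untouched, so it
preserves determinism and completeness. -/

theorem autClass_subset_of_map {A : Type} {P : OFA A → Prop} {L L' : OFA A → Set (ℕ → A)}
    (f : OFA A → OFA A) (hP : ∀ M, P M → P (f M)) (hL : ∀ M, L' (f M) = L M) :
    AutClass A P L ⊆ AutClass A P L' := by
  rintro X ⟨M, hM, rfl⟩
  exact ⟨f M, hP M hM, hL M⟩

namespace OFA

variable {A : Type}

def singletonAcc (M : OFA A) : OFA A :=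
  { M with Acc := {S | ∃ q, (∃ F ∈ M.Acc, q ∈ F) ∧ S = {q}} }

theorem langA_singletonAcc (M : OFA A) : M.singletonAcc.LangA = M.Lang CSel.run RSel.meet := by
  ext x
  constructor
  · rintro ⟨p, hp, _, ⟨q, ⟨F, hF, hqF⟩, rfl⟩, hq⟩
    exact ⟨p, hp, F, hF, q, hq rfl, hqF⟩
  · rintro ⟨p, hp, F, hF, q, hq, hqF⟩
    exact ⟨p, hp, {q}, ⟨q, ⟨F, hF, hqF⟩, rfl⟩, singleton_subset_iff.mpr hq⟩

end OFA

theorem stmt_2_general (A : Type) :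
    AutClass A (fun _ : OFA A => True) (fun M => M.Lang CSel.run RSel.meet) ⊆ AutClass A (fun _ : OFA A => True) OFA.LangA ∧
    AutClass A OFA.Deterministic (fun M => M.Lang CSel.run RSel.meet) ⊆ AutClass A OFA.Deterministic OFA.LangA ∧
    AutClass A OFA.Complete (fun M => M.Lang CSel.run RSel.meet) ⊆ AutClass A OFA.Complete OFA.LangA ∧
    AutClass A (fun M : OFA A => M.Deterministic ∧ M.Complete) (fun M => M.Lang CSel.run RSel.meet) ⊆ AutClass A (fun M : OFA A => M.Deterministic ∧ M.Complete) OFA.LangA := by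
  refine ⟨?_, ?_, ?_, ?_⟩ <;>
    exact autClass_subset_of_map OFA.singletonAcc (fun _ h => h) OFA.langA_singletonAcc

theorem stmt_2 (A : Type) [Fintype A] :
    AutClass A (fun _ : OFA A => True) (fun M => M.Lang CSel.run RSel.meet) ⊆ AutClass A (fun _ : OFA A => True) OFA.LangA ∧
    AutClass A OFA.Deterministic (fun M => M.Lang CSel.run RSel.meet) ⊆ AutClass A OFA.Deterministic OFA.LangA ∧
    AutClass A OFA.Complete (fun M => M.Lang CSel.run RSel.meet) ⊆ AutClass A OFA.Complete OFA.LangA ∧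
    AutClass A (fun M : OFA A => M.Deterministic ∧ M.Complete) (fun M => M.Lang CSel.run RSel.meet) ⊆ AutClass A (fun M : OFA A => M.Deterministic ∧ M.Complete) OFA.LangA :=
  stmt_2_general A
end

section
/- FA(𝔸') ⊆ FA(run,⊆), DFA(𝔸') ⊆ DFA(run,⊆), CFA(𝔸') ⊆ CFA(run,⊆), and CDFA(𝔸') ⊆ CDFA(run,⊆). -/
open Set

/-- Same automaton with acceptance table `{S | ∃ F ∈ Acc, ¬ F ⊆ S}`. -/
def convA' {A : Type} (M : OFA A) : OFA A :=
  { Q := M.Q, T := M.T, q0 := M.q0, Acc := {S | ∃ F ∈ M.Acc, ¬ F ⊆ S} }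

theorem convA'_lang {A : Type} (M : OFA A) :
    (convA' M).Lang CSel.run RSel.sub = M.LangA' := by
  ext x
  constructor
  · rintro ⟨p, hp, F', ⟨F, hF, hFF'⟩, hsub⟩
    exact ⟨p, hp, F, hF, fun h => hFF' (h.trans hsub)⟩
  · rintro ⟨p, hp, F, hF, hFsub⟩
    exact ⟨p, hp, M.runSet p, ⟨F, hF, hFsub⟩, le_refl _⟩

theorem stmt_3 (A : Type) [Fintype A] :
    AutClass A (fun _ : OFA A => True) OFA.LangA' ⊆ AutClass A (fun _ : OFA A => True) (fun M => M.Lang CSel.run RSel.sub) ∧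
    AutClass A OFA.Deterministic OFA.LangA' ⊆ AutClass A OFA.Deterministic (fun M => M.Lang CSel.run RSel.sub) ∧
    AutClass A OFA.Complete OFA.LangA' ⊆ AutClass A OFA.Complete (fun M => M.Lang CSel.run RSel.sub) ∧
    AutClass A (fun M : OFA A => M.Deterministic ∧ M.Complete) OFA.LangA' ⊆ AutClass A (fun M : OFA A => M.Deterministic ∧ M.Complete) (fun M => M.Lang CSel.run RSel.sub) := by
  have key : ∀ (P : OFA A → Prop),
      (∀ M : OFA A, P M → P (convA' M)) →
      AutClass A P OFA.LangA' ⊆ AutClass A P (fun M => M.Lang CSel.run RSel.sub) := by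
    intro P hP X hX
    obtain ⟨M, hPM, hL⟩ := hX
    exact ⟨convA' M, hP M hPM, (convA'_lang M).trans hL⟩
  exact ⟨key _ fun M h => trivial, key _ fun M h => h, key _ fun M h => h,
    key _ fun M h => h⟩
end

section
/- CDFA(𝕃) ⊆ CDFA(inf,⊓). -/
open Set

/-!
For each set `F` of the acceptance table, run alongside the automaton a pending subset of `F`:
the states of `F` not yet visited since the pending set was last emptied, refilled with `F` after
it empties. Every state of `F` is visited infinitely often iff the pending set of `F` is empty
infinitely often, so the 𝕃-condition becomes an (inf, ⊓)-condition on the product automaton,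
which is still deterministic and complete because the pending sets are updated deterministically.
-/

open Filter

section Pending

variable {α : Type*}

open Classical in
noncomputable def pendingStep (F S : Set α) (q : α) : Set α :=
  (if S = ∅ then F else S) \ {q}

def pendingSet (F : Set α) (p : ℕ → α) : ℕ → Set α
  | 0 => F
  | n + 1 => pendingStep F (pendingSet F p n) (p (n + 1))

variable {F S : Set α} {p : ℕ → α} {q : α}

theorem pendingStep_empty : pendingStep F ∅ q = F \ {q} := by
  simp [pendingStep]

theorem pendingStep_of_ne_empty (hS : S ≠ ∅) : pendingStep F S q = S \ {q} := by
  simp [pendingStep, hS]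

theorem diff_singleton_subset_pendingStep : S \ {q} ⊆ pendingStep F S q := by
  rcases eq_or_ne S ∅ with rfl | hS
  · simp
  · rw [pendingStep_of_ne_empty hS]

theorem pendingSet_subset (n : ℕ) : pendingSet F p n ⊆ F := by
  induction n with
  | zero => exact subset_rfl
  | succ n ih =>
    rcases eq_or_ne (pendingSet F p n) ∅ with hn | hn
    · simp only [pendingSet, hn, pendingStep_empty, sdiff_subset]
    · simp only [pendingSet, pendingStep_of_ne_empty hn]
      exact sdiff_subset.trans ih

theorem frequently_eq_of_frequently_pendingSet_eq_empty
    (h : ∃ᶠ n in atTop, pendingSet F p n = ∅) (hq : q ∈ F) :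
    ∃ᶠ n in atTop, p n = q := by
  rw [frequently_atTop] at h ⊢
  intro N
  obtain ⟨n, hNn, hn⟩ := h N
  obtain ⟨m, hnm, hm⟩ := h (n + 1)
  by_contra! hne
  have hpending : ∀ k, n + 1 ≤ k → q ∈ pendingSet F p k := by
    refine Nat.le_induction ?_ fun k hk ih => ?_
    · simp only [pendingSet, hn, pendingStep_empty]
      exact ⟨hq, (hne _ (by omega)).symm⟩
    · exact diff_singleton_subset_pendingStep ⟨ih, (hne _ (by omega)).symm⟩
  simpa [hm] using hpending m hnm

theorem frequently_pendingSet_eq_empty [Finite α] (h : ∀ q ∈ F, ∃ᶠ n in atTop, p n = q) :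
    ∃ᶠ n in atTop, pendingSet F p n = ∅ := by
  intro hne
  obtain ⟨N, hN⟩ := eventually_atTop.1 hne
  have hsucc : ∀ n ≥ N, pendingSet F p (n + 1) = pendingSet F p n \ {p (n + 1)} :=
    fun n hn => pendingStep_of_ne_empty (hN n hn)
  -- once past `N`, the pending set only shrinks, so a visited state never comes back
  have hleave : ∀ q, ∀ᶠ n in atTop, q ∉ pendingSet F p n := by
    intro q
    by_cases hqF : q ∈ F
    · obtain ⟨m, hm, rfl⟩ := frequently_atTop.1 (h q hqF) (N + 1)
      refine eventually_atTop.2 ⟨m, Nat.le_induction ?_ fun k hk ih => ?_⟩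
      · obtain ⟨k, rfl⟩ : ∃ k, m = k + 1 := ⟨m - 1, by omega⟩
        simp [hsucc k (by omega)]
      · rw [hsucc k (by omega)]
        exact fun hmem => ih hmem.1
    · exact Eventually.of_forall fun n hn => hqF (pendingSet_subset n hn)
  obtain ⟨n, hn, hempty⟩ := (hne.and (eventually_all.2 hleave)).exists
  exact hn (eq_empty_iff_forall_notMem.2 hempty)

end Pending

namespace OFA

variable {A : Type} (M : OFA A)

noncomputable def pendingAutomaton : OFA A where
  Q := M.Q × (Set M.Q → Set M.Q)
  T s a s' := M.T s.1 a s'.1 ∧ s'.2 = fun F => pendingStep F (s.2 F) s'.1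
  q0 := (M.q0, id)
  Acc := {{s | ∃ F ∈ M.Acc, s.2 F = ∅}}

variable {M}

theorem mem_infSet_iff {p : ℕ → M.Q} {q : M.Q} :
    q ∈ M.infSet p ↔ ∃ᶠ n in atTop, p n = q :=
  frequently_atTop.symm

theorem Deterministic.pendingAutomaton (h : M.Deterministic) :
    M.pendingAutomaton.Deterministic := by
  rintro s a t t' ⟨hq, ht⟩ ⟨hq', ht'⟩
  have hfst : t.1 = t'.1 := h _ _ _ _ hq hq'
  exact Prod.ext hfst (by rw [ht, ht', hfst])

theorem Complete.pendingAutomaton (h : M.Complete) : M.pendingAutomaton.Complete := by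
  intro s a
  obtain ⟨q, hq⟩ := h s.1 a
  exact ⟨(q, fun F => pendingStep F (s.2 F) q), hq, rfl⟩

theorem InitPath.pendingAutomaton {p : ℕ → M.Q} {x : ℕ → A} (hp : M.InitPath p x) :
    M.pendingAutomaton.InitPath (fun n => (p n, fun F => pendingSet F p n)) x :=
  ⟨Prod.ext hp.1 rfl, fun n => ⟨hp.2 n, rfl⟩⟩

theorem InitPath.snd_eq_pendingSet {s : ℕ → M.pendingAutomaton.Q} {x : ℕ → A}
    (hs : M.pendingAutomaton.InitPath s x) (n : ℕ) :
    (s n).2 = fun F => pendingSet F (fun k => (s k).1) n := by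
  induction n with
  | zero => rw [hs.1]; rfl
  | succ n ih => rw [(hs.2 n).2, ih]; rfl

theorem lang_pendingAutomaton : M.pendingAutomaton.Lang .inf .meet = M.LangL := by
  ext x
  constructor
  · rintro ⟨s, hs, _, rfl, t, hts, F, hF, htF⟩
    refine ⟨fun n => (s n).1, ⟨congrArg Prod.fst hs.1, fun n => (hs.2 n).1⟩, F, hF,
      fun q hq => mem_infSet_iff.2 <| frequently_eq_of_frequently_pendingSet_eq_empty
        ((mem_infSet_iff.1 hts).mono fun n hn => ?_) hq⟩
    rw [← congrFun (hs.snd_eq_pendingSet n) F, hn, htF]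
  · rintro ⟨p, hp, F, hF, hFinf⟩
    have hempty : ∃ᶠ n in atTop, pendingSet F p n = ∅ :=
      frequently_pendingSet_eq_empty fun q hq => mem_infSet_iff.1 (hFinf hq)
    -- pigeonhole over the finitely many states of the product automaton
    obtain ⟨t, ht⟩ := frequently_exists.1 <| hempty.mono fun n hn =>
      (⟨_, rfl, hn⟩ : ∃ t : M.pendingAutomaton.Q,
        (p n, fun F => pendingSet F p n) = t ∧ t.2 F = ∅)
    obtain ⟨_, -, htF⟩ := ht.exists
    exact ⟨_, hp.pendingAutomaton, _, rfl, t, mem_infSet_iff.2 (ht.mono fun _ h => h.1),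
      F, hF, htF⟩

end OFA

theorem stmt_9_general (A : Type) :
    AutClass A (fun M : OFA A => M.Deterministic ∧ M.Complete) OFA.LangL ⊆ AutClass A (fun M : OFA A => M.Deterministic ∧ M.Complete) (fun M => M.Lang CSel.inf RSel.meet) := by
  rintro X ⟨M, ⟨hdet, hcomp⟩, rfl⟩
  exact ⟨M.pendingAutomaton, ⟨hdet.pendingAutomaton, hcomp.pendingAutomaton⟩,
    OFA.lang_pendingAutomaton⟩

theorem stmt_9 (A : Type) [Fintype A] :
    AutClass A (fun M : OFA A => M.Deterministic ∧ M.Complete) OFA.LangL ⊆ AutClass A (fun M : OFA A => M.Deterministic ∧ M.Complete) (fun M => M.Lang CSel.inf RSel.meet) :=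
  stmt_9_general A
end

section
/- The ω-language (a+b)*a^ω = {x ∈ {a,b}^ω : x contains only finitely many occurrences of b} belongs to CDFA(𝕃'). -/
open Set

/-- Over the alphabet `Bool` we take `a := true` and `b := false`.
`(a+b)*a^ω` is the set of ω-words with finitely many occurrences of `b`. -/
theorem stmt_11 :
    {x : ℕ → Bool | ∃ N, ∀ i, N ≤ i → x i = true} ∈
      AutClass Bool (fun M : OFA Bool => M.Deterministic ∧ M.Complete) OFA.LangL' := by
  refine ⟨⟨Bool, fun p a q => q = a, true, {{false}}⟩, ⟨?_, ?_⟩, ?_⟩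
  · intro p a q q' h h'; simp_all
  · intro p a; exact ⟨a, rfl⟩
  · ext x
    simp only [OFA.LangL', Set.mem_setOf_eq, Set.mem_singleton_iff]
    constructor
    · rintro ⟨p, ⟨-, hstep⟩, F, hF, hnsub⟩
      subst hF
      rw [Set.singleton_subset_iff] at hnsub
      simp only [OFA.infSet, Set.mem_setOf_eq, not_forall, not_exists, not_and] at hnsub
      obtain ⟨n, hn⟩ := hnsub
      refine ⟨n, fun i hi => ?_⟩
      have := hn (i+1) (by omega)
      have hstep' := hstep i
      simp only at hstep'
      rw [hstep'] at this
      simpa using this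
    · rintro ⟨N, hN⟩
      refine ⟨fun i => if i = 0 then true else x (i-1), ⟨rfl, fun i => by simp⟩,
        {false}, rfl, ?_⟩
      rw [Set.singleton_subset_iff]
      simp only [OFA.infSet, Set.mem_setOf_eq, not_forall, not_exists, not_and]
      refine ⟨N+1, fun i hi => ?_⟩
      have : x (i-1) = true := hN (i-1) (by omega)
      simp [show i ≠ 0 by omega, this]
end

section
/- The ω-language ab*a(a+b)^ω = {x ∈ {a,b}^ω : x₀ = a and there is n ≥ 1 with xᵢ = b for all 1 ≤ i < n and xₙ = a} belongs to DFA(𝕃') but does not belong to CFA(𝕃'). -/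
open Set

/-! A complete automaton `M` recognizing `ab*a(a+b)^ω` under 𝕃' must, on every word outside the
language, visit every state of every acceptance set infinitely often. Let `k` be the number of
states and let `p` be an accepting run on `a bᵏ a b^ω`, with `q ∈ F ∈ Acc` visited only finitely
often. By completeness `q` is reached on some nonempty prefix of `b^ω`; if `p` visited `q`, that
prefix followed by the rest of `p` would be a run on a word beginning with `b` with the same
states visited infinitely often as `p`. So `p` never visits `q`. Pumping a cycle of `p` inside the
`b`-block gives a run on `a b^ω` through states of `p` only, hence avoiding `q`: a contradiction.
A partial automaton escapes this argument because it has no run at all on words beginning with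
`b`. -/

def splice {α : Type*} (u v : ℕ → α) (m : ℕ) : ℕ → α :=
  fun n => if n < m then u n else v (n - m)

namespace OFA

variable {A : Type} {M : OFA A}

theorem Complete.exists_initPath (hC : M.Complete) (x : ℕ → A) : ∃ p, M.InitPath p x := by
  choose δ hδ using hC
  exact ⟨fun n => Nat.rec M.q0 (fun n s => δ s (x n)) n, rfl, fun n => hδ _ _⟩

theorem InitPath.splice {p t : ℕ → M.Q} {x z : ℕ → A} (hp : M.InitPath p x) {m : ℕ}
    (ht : ∀ d, M.T (t d) (z d) (t (d + 1))) (ht0 : t 0 = p m) :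
    M.InitPath (_root_.splice p t m) (_root_.splice x z m) := by
  refine ⟨?_, fun n => ?_⟩
  · rcases Nat.eq_zero_or_pos m with rfl | hm
    · simp [_root_.splice, ht0, hp.1]
    · simp [_root_.splice, hm, hp.1]
  · rcases lt_trichotomy (n + 1) m with h | rfl | h
    · simpa [_root_.splice, h, show n < m by omega] using hp.2 n
    · simpa [_root_.splice, ht0] using hp.2 n
    · simpa [_root_.splice, show ¬ n < m by omega, show ¬ n + 1 < m by omega,
        show n + 1 - m = n - m + 1 by omega] using ht (n - m)

theorem transition_cycle {p : ℕ → M.Q} {x : ℕ → A} {i j : ℕ} (hij : i < j) (hpij : p i = p j)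
    (hp : ∀ s, i ≤ s → s < j → M.T (p s) (x s) (p (s + 1))) (d : ℕ) :
    M.T (p (i + d % (j - i))) (x (i + d % (j - i))) (p (i + (d + 1) % (j - i))) := by
  have hd : d % (j - i) < j - i := Nat.mod_lt d (by omega)
  have hnext : p (i + (d + 1) % (j - i)) = p (i + d % (j - i) + 1) := by
    rw [← Nat.mod_add_mod]
    rcases (Nat.succ_le_of_lt hd).lt_or_eq with h | h
    · rw [Nat.mod_eq_of_lt h, add_assoc]
    · rw [Nat.succ_eq_add_one] at h
      rw [h, Nat.mod_self, add_zero, hpij]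
      congr 1
      omega
  exact hnext ▸ hp _ (by omega) (by omega)

theorem infSet_splice (u v : ℕ → M.Q) (m : ℕ) : M.infSet (_root_.splice u v m) = M.infSet v := by
  ext q
  constructor
  · intro h n
    obtain ⟨i, hi, hq⟩ := h (n + m)
    exact ⟨i - m, by omega, by simpa [_root_.splice, show ¬ i < m by omega] using hq⟩
  · intro h n
    obtain ⟨i, hi, hq⟩ := h n
    exact ⟨i + m, by omega, by simpa [_root_.splice] using hq⟩

theorem infSet_shift (p : ℕ → M.Q) (m : ℕ) : M.infSet (fun d => p (m + d)) = M.infSet p := by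
  ext q
  constructor
  · intro h n
    obtain ⟨i, hi, hq⟩ := h n
    exact ⟨m + i, by omega, hq⟩
  · intro h n
    obtain ⟨i, hi, hq⟩ := h (n + m)
    exact ⟨i - m, by omega, by simpa [show m + (i - m) = i by omega] using hq⟩

theorem subset_infSet_of_notMem_langL' {p : ℕ → M.Q} {x : ℕ → A} (hp : M.InitPath p x)
    (hx : x ∉ M.LangL') {F : Set M.Q} (hF : F ∈ M.Acc) : F ⊆ M.infSet p := by
  by_contra hFp
  exact hx ⟨p, hp, F, hF, hFp⟩

end OFA

theorem exists_lt_le_add_card_apply_eq {Q : Type*} [Finite Q] (p : ℕ → Q) (s : ℕ) :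
    ∃ i j, s ≤ i ∧ i < j ∧ j ≤ s + Nat.card Q ∧ p i = p j := by
  have := Fintype.ofFinite Q
  obtain ⟨a, b, hab, he⟩ := Fintype.exists_ne_map_eq_of_card_lt
    (fun a : Fin (Nat.card Q + 1) => p (s + a)) (by simp [Nat.card_eq_fintype_card])
  rcases hab.lt_or_gt with h | h
  · exact ⟨s + a, s + b, by omega, Nat.add_lt_add_left h s, by omega, he⟩
  · exact ⟨s + b, s + a, by omega, Nat.add_lt_add_left h s, by omega, he.symm⟩

-- `a := true`, `b := false`
def abStarA : Set (ℕ → Bool) :=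
  {x | x 0 = true ∧ ∃ n, 1 ≤ n ∧ (∀ i, 1 ≤ i → i < n → x i = false) ∧ x n = true}

theorem mem_abStarA_of_exists {x : ℕ → Bool} (h0 : x 0 = true) (h : ∃ n, 1 ≤ n ∧ x n = true) :
    x ∈ abStarA := by
  classical
  refine ⟨h0, Nat.find h, (Nat.find_spec h).1, fun i hi hin => ?_, (Nat.find_spec h).2⟩
  simpa [hi] using Nat.find_min h hin

theorem notMem_abStarA_of_head {x : ℕ → Bool} (h : x 0 = false) : x ∉ abStarA := by
  simp [abStarA, h]

theorem notMem_abStarA_of_tail {x : ℕ → Bool} (h : ∀ n, 1 ≤ n → x n = false) : x ∉ abStarA :=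
  fun ⟨_, n, hn, _, hxn⟩ => by simp [h n hn] at hxn

def abStarAStep : Fin 3 → Bool → Option (Fin 3)
  | 0, true => some 1
  | 0, false => none
  | 1, false => some 1
  | 1, true => some 2
  | 2, _ => some 2

abbrev abStarADFA : OFA Bool where
  Q := Fin 3
  T p a q := abStarAStep p a = some q
  q0 := 0
  Acc := {{1}}

theorem abStarADFA_deterministic : abStarADFA.Deterministic :=
  fun _ _ _ _ h h' => Option.some_injective _ (h.symm.trans h')

theorem langL'_abStarADFA_subset : abStarADFA.LangL' ⊆ abStarA := by
  rintro x ⟨p, ⟨hp0, hp⟩, F, rfl, hF⟩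
  have h0 : x 0 = true ∧ p 1 = 1 := by
    have := hp 0
    rw [hp0] at this
    cases hx : x 0 <;> simp_all [abStarADFA, abStarAStep]
  refine mem_abStarA_of_exists h0.1 ?_
  by_contra! hb
  have hp1 : ∀ n, p (n + 1) = 1 := by
    intro n
    induction n with
    | zero => exact h0.2
    | succ n ih =>
      have := hp (n + 1)
      rw [ih, Bool.eq_false_iff.mpr (hb (n + 1) (by omega))] at this
      exact (Option.some_injective _ this).symm
  exact hF (singleton_subset_iff.mpr fun n => ⟨n + 1, by omega, hp1 n⟩)

theorem abStarA_subset_langL'_abStarADFA : abStarA ⊆ abStarADFA.LangL' := by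
  rintro x ⟨h0, n, hn, hb, hxn⟩
  refine ⟨fun i => if i = 0 then 0 else if i ≤ n then 1 else 2, ⟨rfl, fun i => ?_⟩, {1}, rfl,
    fun h => ?_⟩
  · show abStarAStep _ _ = _
    rcases Nat.lt_trichotomy i n with hi | rfl | hi
    · rcases Nat.eq_zero_or_pos i with rfl | hi0
      · simp [h0, abStarAStep, show 1 ≤ n from hn]
      · simp [hb i hi0 hi, abStarAStep, show i ≠ 0 by omega, hi.le, show i + 1 ≤ n from hi]
    · simp [hxn, abStarAStep, show i ≠ 0 by omega]
    · simp [abStarAStep, show i ≠ 0 by omega, show ¬ i ≤ n by omega, show ¬ i + 1 ≤ n by omega]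
  · obtain ⟨i, hi, he⟩ := h rfl (n + 1)
    simp [show i ≠ 0 by omega, show ¬ i ≤ n by omega] at he

theorem langL'_abStarADFA : abStarADFA.LangL' = abStarA :=
  langL'_abStarADFA_subset.antisymm abStarA_subset_langL'_abStarADFA

section Complete

variable {M : OFA Bool}

theorem mem_infSet_of_apply_eq (hC : M.Complete) (hL : M.LangL' = abStarA) {F : Set M.Q}
    (hF : F ∈ M.Acc) {q : M.Q} (hq : q ∈ F) {p : ℕ → M.Q} {x : ℕ → Bool} (hp : M.InitPath p x)
    {m : ℕ} (hm : p m = q) : q ∈ M.infSet p := by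
  obtain ⟨r, hr⟩ := hC.exists_initPath fun _ => false
  obtain ⟨t, ht, hrt⟩ :=
    OFA.subset_infSet_of_notMem_langL' hr (hL ▸ notMem_abStarA_of_head rfl) hF hq 1
  have hprefixed := hr.splice (m := t) (z := fun d => x (m + d)) (fun d => hp.2 (m + d))
    (by simp [hrt, hm])
  have hlabel : splice (fun _ => false) (fun d => x (m + d)) t 0 = false := by
    simp [splice, show 0 < t by omega]
  have := OFA.subset_infSet_of_notMem_langL' hprefixed (hL ▸ notMem_abStarA_of_head hlabel) hF hq
  rwa [OFA.infSet_splice, OFA.infSet_shift] at this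

theorem langL'_ne_abStarA_of_complete (hC : M.Complete) : M.LangL' ≠ abStarA := by
  intro hL
  set k := Nat.card M.Q
  let y : ℕ → Bool := fun m => decide (m = 0 ∨ m = k + 1)
  have hb : ∀ s, 1 ≤ s → s ≤ k → y s = false := by
    intro s h1 h2
    simp only [y, decide_eq_false_iff_not]
    omega
  obtain ⟨p, hp, F, hF, hFp⟩ : y ∈ M.LangL' :=
    hL ▸ mem_abStarA_of_exists (by simp [y]) ⟨k + 1, by omega, by simp [y]⟩
  obtain ⟨q, hqF, hqp⟩ := not_subset.mp hFp
  obtain ⟨i, j, hi, hij, hj, hpij⟩ := exists_lt_le_add_card_apply_eq p 1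
  have hpumped := hp.splice (m := i) (OFA.transition_cycle hij hpij fun s _ _ => hp.2 s) (by simp)
  have hlabel : ∀ n, 1 ≤ n → splice y (fun d => y (i + d % (j - i))) i n = false := by
    intro n hn
    have := Nat.mod_lt (n - i) (show 0 < j - i by omega)
    unfold splice
    split_ifs <;> exact hb _ (by omega) (by omega)
  have hq := OFA.subset_infSet_of_notMem_langL' hpumped (hL ▸ notMem_abStarA_of_tail hlabel) hF hqF
  rw [OFA.infSet_splice] at hq
  obtain ⟨d, -, hd⟩ := hq 0
  exact hqp (mem_infSet_of_apply_eq hC hL hF hqF hp hd)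

end Complete

/-- Over the alphabet `Bool` we take `a := true` and `b := false`.
`ab*a(a+b)^ω` is the set of ω-words starting with `a`, followed by a (possibly
empty) block of `b`'s, followed by an `a`. It is in DFA(𝕃') but not in CFA(𝕃'). -/
theorem stmt_12 :
    {x : ℕ → Bool | x 0 = true ∧ ∃ n, 1 ≤ n ∧ (∀ i, 1 ≤ i → i < n → x i = false) ∧ x n = true} ∈ AutClass Bool OFA.Deterministic OFA.LangL' ∧
    {x : ℕ → Bool | x 0 = true ∧ ∃ n, 1 ≤ n ∧ (∀ i, 1 ≤ i → i < n → x i = false) ∧ x n = true} ∉ AutClass Bool OFA.Complete OFA.LangL' :=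
  ⟨⟨abStarADFA, abStarADFA_deterministic, langL'_abStarADFA⟩,
    fun ⟨_, hC, hL⟩ => langL'_ne_abStarA_of_complete hC hL⟩
end

section
/- The ω-language b*ab*a(a+b)^ω = {x ∈ {a,b}^ω : x contains at least two occurrences of a} does not belong to FA(𝕃'). -/
open Set

/-- Pumping: from a run with a repeated state we build an ultimately periodic run. -/
lemma two_a_pump {M : OFA Bool} {p : ℕ → M.Q} {x : ℕ → Bool}
    (hT : ∀ k, M.T (p k) (x k) (p (k + 1))) {i j : ℕ} (hij : i < j) (heq : p i = p j) :
    ∃ (r : ℕ → M.Q) (y : ℕ → Bool), (r 0 = p 0) ∧ (∀ k, M.T (r k) (y k) (r (k + 1))) ∧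
      ∀ s : ℕ, (s < i ∧ r s = p s ∧ y s = x s) ∨
        ∃ k, i ≤ k ∧ k < j ∧ r s = p k ∧ y s = x k := by
  classical
  set d := j - i with hd
  have hd0 : 0 < d := by omega
  set idx : ℕ → ℕ := fun s => if s < i then s else i + (s - i) % d with hidx
  have hlt : ∀ s, s < i → idx s = s := fun s hs => if_pos hs
  have hge : ∀ s, ¬ s < i → idx s = i + (s - i) % d := fun s hs => if_neg hs
  refine ⟨fun s => p (idx s), fun s => x (idx s), ?_, ?_, ?_⟩
  · show p (idx 0) = p 0
    rcases Nat.eq_zero_or_pos i with h | h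
    · rw [hge 0 (by omega), h]
      simp
    · rw [hlt 0 h]
  · intro k
    show M.T (p (idx k)) (x (idx k)) (p (idx (k + 1)))
    by_cases h1 : k + 1 < i
    · rw [hlt k (by omega), hlt (k + 1) h1]
      exact hT k
    · by_cases h2 : k < i
      · have h3 : k + 1 = i := by omega
        have h4 : idx (k + 1) = k + 1 := by
          rw [hge (k + 1) h1, show k + 1 - i = 0 from by omega]
          simp [h3]
        rw [hlt k h2, h4]
        exact hT k
      · set e := (k - i) % d with he
        have hed : e < d := Nat.mod_lt _ hd0
        have base : (k + 1 - i) % d = (e + 1) % d := by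
          rw [show k + 1 - i = (k - i) + 1 from by omega]
          conv_lhs => rw [show k - i = d * ((k - i) / d) + e from (Nat.div_add_mod _ _).symm]
          rw [Nat.add_assoc, Nat.add_comm (d * ((k - i) / d)), Nat.add_mul_mod_self_left]
        by_cases h4 : e + 1 = d
        · have h5 : idx (k + 1) = i := by
            rw [hge (k + 1) h1, base, h4, Nat.mod_self, Nat.add_zero]
          rw [hge k h2, ← he, h5]
          have h6 := hT (i + e)
          rw [show i + e + 1 = j from by omega, ← heq] at h6
          exact h6
        · have h5 : idx (k + 1) = i + (e + 1) := by
            rw [hge (k + 1) h1, base, Nat.mod_eq_of_lt (by omega)]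
          rw [hge k h2, ← he, h5, show i + (e + 1) = (i + e) + 1 from by omega]
          exact hT (i + e)
  · intro s
    by_cases hs : s < i
    · exact Or.inl ⟨hs, by show p (idx s) = p s; rw [hlt s hs],
        by show x (idx s) = x s; rw [hlt s hs]⟩
    · refine Or.inr ⟨i + (s - i) % d, Nat.le_add_right _ _, ?_,
        by show p (idx s) = p (i + (s - i) % d); rw [hge s hs],
        by show x (idx s) = x (i + (s - i) % d); rw [hge s hs]⟩
      have := Nat.mod_lt (s - i) hd0
      omega

/-- Over the alphabet `Bool` we take `a := true` and `b := false`.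
`b*ab*a(a+b)^ω` is the set of ω-words with at least two occurrences of `a`. -/
theorem stmt_13 :
    {x : ℕ → Bool | ∃ i j, i < j ∧ x i = true ∧ x j = true} ∉ AutClass Bool (fun _ : OFA Bool => True) OFA.LangL' := by
  rintro ⟨M, -, hM⟩
  classical
  have : Fintype M.Q := Fintype.ofFinite _
  set L := {x : ℕ → Bool | ∃ i j, i < j ∧ x i = true ∧ x j = true} with hLdef
  set m := Fintype.card M.Q with hm
  set w : ℕ → Bool := fun s => decide (s = m ∨ s = 2 * m + 1) with hwdef
  have hxiff : ∀ s, w s = true ↔ (s = m ∨ s = 2 * m + 1) := by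
    intro s; simp [hwdef]
  have hwL : w ∈ L := ⟨m, 2 * m + 1, by omega, (hxiff m).2 (Or.inl rfl), (hxiff _).2 (Or.inr rfl)⟩
  rw [← hM] at hwL
  obtain ⟨p, ⟨hp0, hpT⟩, F, hFAcc, hFn⟩ := hwL
  rw [Set.not_subset] at hFn
  obtain ⟨q, hqF, hqinf⟩ := hFn
  obtain ⟨N, hN⟩ : ∃ N, ∀ i, N ≤ i → p i ≠ q := by
    by_contra h
    push_neg at h
    exact hqinf h
  have pigeon : ∀ off : ℕ, ∃ i j, off ≤ i ∧ i < j ∧ j ≤ off + m ∧ p i = p j := by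
    intro off
    obtain ⟨a, b, hab, hfab⟩ := Fintype.exists_ne_map_eq_of_card_lt
      (fun s : Fin (m + 1) => p (off + (s : ℕ)))
      (by rw [Fintype.card_fin, ← hm]; omega)
    have ha := a.isLt
    have hb := b.isLt
    rcases lt_or_gt_of_ne hab with h | h
    · have h' : (a : ℕ) < (b : ℕ) := h
      exact ⟨off + a, off + b, by omega, by omega, by omega, hfab⟩
    · have h' : (b : ℕ) < (a : ℕ) := h
      exact ⟨off + b, off + a, by omega, by omega, by omega, hfab.symm⟩
  have hforce : ∀ (r : ℕ → M.Q) (y : ℕ → Bool), r 0 = M.q0 →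
      (∀ k, M.T (r k) (y k) (r (k + 1))) → y ∉ L → ∀ n, ∃ s, n ≤ s ∧ r s = q := by
    intro r y hr0 hrT hyL
    by_contra hqr
    have hmem : y ∈ M.LangL' := ⟨r, ⟨hr0, hrT⟩, F, hFAcc, fun hsub => hqr (hsub hqF)⟩
    rw [hM] at hmem
    exact hyL hmem
  obtain ⟨t, htm, hpt⟩ : ∃ t, t < m ∧ p t = q := by
    obtain ⟨i, j, hoi, hij, hjm, hpij⟩ := pigeon 0
    obtain ⟨r, y, hr0, hrT, hprop⟩ := two_a_pump hpT hij hpij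
    have hyL : y ∉ L := by
      rintro ⟨i', j', hij', hyi, hyj⟩
      have hall : ∀ s, y s ≠ true := by
        intro s hs
        rcases hprop s with ⟨h1, _, h3⟩ | ⟨k, hk1, hk2, _, h3⟩
        · rw [h3] at hs; rcases (hxiff s).1 hs with h | h <;> omega
        · rw [h3] at hs; rcases (hxiff k).1 hs with h | h <;> omega
      exact hall i' hyi
    obtain ⟨s, hsi, hsq⟩ := hforce r y (hr0.trans hp0) hrT hyL i
    rcases hprop s with ⟨h1, _, _⟩ | ⟨k, hk1, hk2, h2, _⟩
    · omega
    · exact ⟨k, by omega, by rw [← h2]; exact hsq⟩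
  by_cases hcase : ∃ u, m + 1 ≤ u ∧ p u = q
  · obtain ⟨u, hum, hpu⟩ := hcase
    set r : ℕ → M.Q := fun s => if s < t then p s else p (s - t + u) with hr
    set y : ℕ → Bool := fun s => if s < t then w s else w (s - t + u) with hy
    have hr0 : r 0 = M.q0 := by
      rcases Nat.eq_zero_or_pos t with h | h
      · simp only [hr]
        rw [if_neg (by omega), show 0 - t + u = u from by omega, hpu, ← hpt, h]
        exact hp0
      · simp only [hr]
        rw [if_pos h]
        exact hp0
    have hrT : ∀ s, M.T (r s) (y s) (r (s + 1)) := by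
      intro s
      by_cases h1 : s + 1 < t
      · have h2 : s < t := by omega
        simp only [hr, hy, if_pos h1, if_pos h2]
        exact hpT s
      · by_cases h2 : s < t
        · have h3 : s + 1 = t := by omega
          simp only [hr, hy, if_pos h2, if_neg h1]
          have h4 : p (s + 1 - t + u) = p (s + 1) := by
            rw [show s + 1 - t + u = u from by omega, hpu, ← hpt, h3]
          rw [h4]
          exact hpT s
        · simp only [hr, hy, if_neg h1, if_neg h2]
          rw [show s + 1 - t + u = (s - t + u) + 1 from by omega]
          exact hpT (s - t + u)
    have hyL : y ∉ L := by
      rintro ⟨i', j', hij', hyi, hyj⟩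
      have key : ∀ s, y s = true → s = 2 * m + 1 + t - u := by
        intro s hs
        simp only [hy] at hs
        by_cases h : s < t
        · rw [if_pos h] at hs
          rcases (hxiff s).1 hs with h' | h' <;> omega
        · rw [if_neg h] at hs
          rcases (hxiff _).1 hs with h' | h' <;> omega
      have k1 := key i' hyi
      have k2 := key j' hyj
      omega
    obtain ⟨s, hs, hsq⟩ := hforce r y hr0 hrT hyL (N + t)
    have h1 : ¬ s < t := by omega
    simp only [hr, if_neg h1] at hsq
    exact hN (s - t + u) (by omega) hsq
  · push_neg at hcase
    obtain ⟨i, j, hoi, hij, hjm, hpij⟩ := pigeon (m + 1)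
    obtain ⟨r, y, hr0, hrT, hprop⟩ := two_a_pump hpT hij hpij
    have hyL : y ∉ L := by
      rintro ⟨i', j', hij', hyi, hyj⟩
      have key : ∀ s, y s = true → s = m := by
        intro s hs
        rcases hprop s with ⟨h1, _, h3⟩ | ⟨k, hk1, hk2, _, h3⟩
        · rw [h3] at hs; rcases (hxiff s).1 hs with h | h <;> omega
        · rw [h3] at hs; rcases (hxiff k).1 hs with h | h <;> omega
      have k1 := key i' hyi
      have k2 := key j' hyj
      omega
    obtain ⟨s, hs, hsq⟩ := hforce r y (hr0.trans hp0) hrT hyL i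
    rcases hprop s with ⟨h1, _, _⟩ | ⟨k, hk1, hk2, h2, _⟩
    · omega
    · exact hcase k (by omega) (by rw [← h2]; exact hsq)
end

section
/- The ω-language (a+b)*ba^ω = {x ∈ {a,b}^ω : x contains at least one b and only finitely many occurrences of b} belongs to CFA(𝕃') but does not belong to DFA(𝕃'). -/
open Set

/-! ### Auxiliary material for `stmt_14` -/

/-- Our target ω-language. -/
def LsetB : Set (ℕ → Bool) :=
  {x : ℕ → Bool | (∃ i, x i = false) ∧ ∃ N, ∀ i, N ≤ i → x i = true}

/-- Transition relation of the complete witness automaton. -/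
def M1T : Bool → Bool → Bool → Prop
  | true, true, q => q = true
  | true, false, _ => True
  | false, true, q => q = false
  | false, false, q => q = true

/-- The complete witness automaton. -/
abbrev M1 : OFA Bool where
  Q := Bool
  finQ := inferInstance
  T := M1T
  q0 := true
  Acc := {{true}}

section Det

variable {M : OFA Bool}

/-- Determinism: runs agree as long as the labels agree. -/
lemma run_agree (hdet : M.Deterministic) {x y : ℕ → Bool} {p q : ℕ → M.Q}
    (h0 : p 0 = q 0) :
    ∀ n, (∀ j, j < n → x j = y j) → (∀ j, j < n → M.T (p j) (x j) (p (j+1))) →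
      (∀ j, j < n → M.T (q j) (y j) (q (j+1))) → p n = q n := by
  intro n
  induction n with
  | zero => intro _ _ _; exact h0
  | succ n ih =>
    intro hxy hp hq
    have hpn : p n = q n :=
      ih (fun j hj => hxy j (Nat.lt_succ_of_lt hj))
        (fun j hj => hp j (Nat.lt_succ_of_lt hj))
        (fun j hj => hq j (Nat.lt_succ_of_lt hj))
    have h1 : M.T (q n) (y n) (p (n+1)) := by
      have := hp n (Nat.lt_succ_self n)
      rwa [hpn, hxy n (Nat.lt_succ_self n)] at this
    exact hdet _ _ _ _ h1 (hq n (Nat.lt_succ_self n))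

/-- Every ω-word admits a run, when the automaton recognizes `LsetB`. -/
lemma run_exists (hdet : M.Deterministic) (hL : M.LangL' = LsetB) (x : ℕ → Bool) :
    ∃ p, M.InitPath p x := by
  have partial_run : ∀ n : ℕ, ∃ p : ℕ → M.Q,
      p 0 = M.q0 ∧ ∀ i, i < n → M.T (p i) (x i) (p (i+1)) := by
    intro n
    set y : ℕ → Bool := fun i => if i < n then x i else if i = n then false else true with hy
    have hyL : y ∈ M.LangL' := by
      rw [hL]
      refine ⟨⟨n, ?_⟩, n + 1, fun i hi => ?_⟩
      · simp [hy]
      · have h1 : ¬ i < n := by omega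
        have h2 : i ≠ n := by omega
        simp [hy, h1, h2]
    obtain ⟨p, hp, -⟩ := hyL
    refine ⟨p, hp.1, fun i hi => ?_⟩
    have := hp.2 i
    have hyi : y i = x i := by simp [hy, hi]
    rwa [hyi] at this
  classical
  choose P hP0 hPT using partial_run
  refine ⟨fun m => P (m + 1) m, hP0 1, fun i => ?_⟩
  have hagree : P (i + 1) i = P (i + 2) i := by
    refine run_agree hdet (x := x) (y := x) ((hP0 _).trans (hP0 _).symm) i
      (fun _ _ => rfl) (fun j hj => hPT _ j (by omega)) (fun j hj => hPT _ j (by omega))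
  show M.T (P (i + 1) i) (x i) (P (i + 2) (i + 1))
  rw [hagree]
  exact hPT (i + 2) i (by omega)

end Det

/-- Over the alphabet `Bool` we take `a := true` and `b := false`.
`(a+b)*ba^ω` is the set of ω-words with at least one `b` and only finitely
many occurrences of `b`. It is in CFA(𝕃') but not in DFA(𝕃'). -/
theorem stmt_14 :
    {x : ℕ → Bool | (∃ i, x i = false) ∧ ∃ N, ∀ i, N ≤ i → x i = true} ∈ AutClass Bool OFA.Complete OFA.LangL' ∧
    {x : ℕ → Bool | (∃ i, x i = false) ∧ ∃ N, ∀ i, N ≤ i → x i = true} ∉ AutClass Bool OFA.Deterministic OFA.LangL' := by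
  classical
  constructor
  · -- Positive part: the complete automaton `M1` recognizes the language under 𝕃'.
    refine ⟨M1, ?_, ?_⟩
    · -- completeness
      intro p a
      cases p <;> cases a
      · exact ⟨true, rfl⟩
      · exact ⟨false, rfl⟩
      · exact ⟨true, trivial⟩
      · exact ⟨true, rfl⟩
    · ext x
      simp only [Set.mem_setOf_eq]
      constructor
      · rintro ⟨p, ⟨hp0, hpT⟩, F, hF, hFn⟩
        have hF' : F = {true} := hF
        subst hF'
        have htail : ∃ n, ∀ i, n ≤ i → p i = false := by
          by_contra h
          push_neg at h
          apply hFn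
          intro q hq
          rcases Set.mem_singleton_iff.mp hq with rfl
          intro n
          obtain ⟨i, hni, hpi⟩ := h n
          cases hpi' : p i
          · exact absurd hpi' hpi
          · exact ⟨i, hni, hpi'⟩
        obtain ⟨n, hn⟩ := htail
        have hxt : ∀ i, n ≤ i → x i = true := by
          intro i hi
          have h1 := hpT i
          rw [hn i hi, hn (i+1) (by omega)] at h1
          cases hxi : x i
          · rw [hxi] at h1
            have h2 : (false : Bool) = true := h1
            exact absurd h2 (by simp)
          · rfl
        have key : ∀ m, p m = false → ∃ i, x i = false := by
          intro m
          induction m with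
          | zero =>
            intro h
            rw [hp0] at h
            have h2 : (true : Bool) = false := h
            exact absurd h2 (by simp)
          | succ m ih =>
            intro h
            cases hpm : p m
            · exact ih hpm
            · have h1 := hpT m
              rw [hpm, h] at h1
              cases hxm : x m
              · exact ⟨m, hxm⟩
              · rw [hxm] at h1
                have h2 : (false : Bool) = true := h1
                exact absurd h2 (by simp)
        exact ⟨key n (hn n le_rfl), n, hxt⟩
      · rintro ⟨⟨i0, hi0⟩, N, hN⟩
        have hi0N : i0 < N := by
          by_contra h
          push_neg at h
          rw [hN i0 h] at hi0
          exact absurd hi0 (by simp)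
        set j := Nat.findGreatest (fun i => x i = false) N with hj
        have hxj : x j = false :=
          Nat.findGreatest_spec (P := fun i => x i = false) (le_of_lt hi0N) hi0
        have hgt : ∀ i, j < i → x i = true := by
          intro i hi
          rcases le_or_gt N i with h | h
          · exact hN i h
          · have hng := Nat.findGreatest_is_greatest (P := fun i => x i = false) hi (le_of_lt h)
            cases hxi : x i
            · exact absurd hxi hng
            · rfl
        refine ⟨fun i => decide (i ≤ j), ⟨by simp, ?_⟩, {true}, rfl, ?_⟩
        · intro i
          show M1.T (decide (i ≤ j)) (x i) (decide (i + 1 ≤ j))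
          rcases lt_trichotomy i j with h | h | h
          · have e1 : decide (i ≤ j) = true := decide_eq_true (by omega)
            have e2 : decide (i + 1 ≤ j) = true := decide_eq_true (by omega)
            rw [e1, e2]
            cases hxi : x i
            · exact (trivial : M1T true false true)
            · exact (rfl : (true : Bool) = true)
          · have e1 : decide (i ≤ j) = true := decide_eq_true (le_of_eq h)
            have e2 : decide (i + 1 ≤ j) = false := decide_eq_false (by omega)
            have e3 : x i = false := by rw [h, hxj]
            rw [e1, e2, e3]
            exact (trivial : M1T true false false)
          · have e1 : decide (i ≤ j) = false := decide_eq_false (by omega)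
            have e2 : decide (i + 1 ≤ j) = false := decide_eq_false (by omega)
            rw [e1, e2, hgt i h]
            exact (rfl : (false : Bool) = false)
        · intro hsub
          obtain ⟨i, hij, hpi⟩ := hsub (Set.mem_singleton true) (j + 1)
          have : i ≤ j := of_decide_eq_true hpi
          omega
  · rintro ⟨M, hdet, hL⟩
    have hL' : M.LangL' = LsetB := hL
    -- the run on a^ω
    obtain ⟨ρ, hρ⟩ := run_exists hdet hL' (fun _ => true)
    set C0 : Set M.Q := M.infSet ρ with hC0def
    have hαL : (fun _ : ℕ => true) ∉ LsetB := by
      rintro ⟨⟨i, hi⟩, -⟩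
      exact absurd hi (by simp)
    have hC0 : ∀ F ∈ M.Acc, F ⊆ C0 := by
      intro F hF
      by_contra hns
      exact hαL (hL' ▸ ⟨ρ, hρ, F, hF, hns⟩)
    -- Claim A: after a `b`, a run never visits C0
    have claimA : ∀ (x : ℕ → Bool) (p : ℕ → M.Q), M.InitPath p x →
        ∀ t j, j < t → x j = false → p t ∉ C0 := by
      intro x p hp t j hjt hxj hmem
      set y : ℕ → Bool := fun i => if i < t then x i else true with hy
      have hyL : y ∈ M.LangL' := by
        rw [hL']
        refine ⟨⟨j, by simp [hy, hjt, hxj]⟩, t, fun i hi => ?_⟩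
        simp [hy, Nat.not_lt.mpr hi]
      obtain ⟨py, hpy, F, hF, hFn⟩ := hyL
      apply hFn
      have hagree : p t = py t :=
        run_agree hdet (hp.1.trans hpy.1.symm) t
          (fun i hi => by simp [hy, hi]) (fun i _ => hp.2 i) (fun i _ => hpy.2 i)
      obtain ⟨i, -, hiρ⟩ := hmem 0
      have hshift : ∀ k, py (t + k) = ρ (i + k) := by
        intro k
        induction k with
        | zero => exact hagree.symm.trans hiρ.symm
        | succ k ih =>
          have h1 : M.T (ρ (i + k)) true (py (t + k + 1)) := by
            have h0 := hpy.2 (t + k)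
            have hyt : y (t + k) = true := by simp [hy]
            rw [hyt, ih] at h0
            exact h0
          have h2 : M.T (ρ (i + k)) true (ρ (i + k + 1)) := hρ.2 (i + k)
          exact hdet _ _ _ _ h1 h2
      have hsub : C0 ⊆ M.infSet py := by
        intro q hq n
        obtain ⟨m, hm, hqm⟩ := hq (i + n)
        refine ⟨t + (m - i), by omega, ?_⟩
        rw [hshift (m - i), (by omega : i + (m - i) = m), hqm]
      exact (hC0 F hF).trans hsub
    -- the words b^ω and b a^ω
    obtain ⟨pb, hpb⟩ := run_exists hdet hL' (fun _ => false)
    have hbL : (fun _ : ℕ => false) ∉ LsetB := by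
      rintro ⟨-, N, hN⟩
      exact absurd (hN N le_rfl) (by simp)
    have hβL : (fun i : ℕ => if i = 0 then false else true) ∈ M.LangL' := by
      rw [hL']
      refine ⟨⟨0, by simp⟩, 1, fun i hi => ?_⟩
      have : i ≠ 0 := by omega
      simp [this]
    obtain ⟨pβ, hpβ, F1, hF1, hF1n⟩ := hβL
    obtain ⟨q1, hq1F, -⟩ := Set.not_subset.mp hF1n
    have hq1C0 : q1 ∈ C0 := hC0 F1 hF1 hq1F
    have hq1inf : q1 ∉ M.infSet pb := by
      intro h
      obtain ⟨i, hi1, hqi⟩ := h 1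
      exact claimA (fun _ => false) pb hpb i 0 (by omega) rfl (hqi ▸ hq1C0)
    apply hbL
    rw [← hL']
    exact ⟨pb, hpb, F1, hF1, fun hsub => hq1inf (hsub hq1F)⟩
end

section
/- DFA(fin,⊆) = CDFA(fin,⊆), FA(fin,⊆) = CFA(fin,⊆), DFA(fin,=) = CDFA(fin,=), and FA(fin,=) = CFA(fin,=). -/
open Set

/-!
Completing an automaton does not change its language under `(fin, ⊆)` or `(fin, =)`. A missing
transition is redirected to a fresh state `inr false`, which is left at once for an absorbing sink
`inr true`. A path that falls out of the original automaton therefore visits `inr false` exactly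
once, so `inr false` lies in its fin-set; since the completed acceptance table only contains sets of
original states, such a path is never accepting. Completion preserves determinism.
-/

namespace OFA

variable {A : Type}

section MapPath

variable {M N : OFA A} {f : M.Q → N.Q}

theorem runSet_comp (p : ℕ → M.Q) : N.runSet (f ∘ p) = f '' M.runSet p := by
  ext q
  simp only [runSet, mem_ofPred_eq, mem_image, Function.comp_apply]
  constructor
  · rintro ⟨i, hi, rfl⟩
    exact ⟨p i, ⟨i, hi, rfl⟩, rfl⟩
  · rintro ⟨_, ⟨i, hi, rfl⟩, rfl⟩
    exact ⟨i, hi, rfl⟩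

theorem infSet_comp (hf : Function.Injective f) (p : ℕ → M.Q) :
    N.infSet (f ∘ p) = f '' M.infSet p := by
  ext q
  simp only [infSet, mem_ofPred_eq, mem_image, Function.comp_apply]
  constructor
  · intro hq
    obtain ⟨i, -, rfl⟩ := hq 0
    exact ⟨p i, fun n => (hq n).imp fun j ⟨hj, hji⟩ => ⟨hj, hf hji⟩, rfl⟩
  · rintro ⟨q, hq, rfl⟩ n
    obtain ⟨j, hj, rfl⟩ := hq n
    exact ⟨j, hj, rfl⟩

theorem finSet_comp (hf : Function.Injective f) (p : ℕ → M.Q) :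
    N.finSet (f ∘ p) = f '' M.finSet p := by
  rw [finSet, finSet, runSet_comp, infSet_comp hf, image_sdiff hf]

end MapPath

theorem _root_.RSel.holds_image_iff {α β : Type} {f : α → β} (hf : Function.Injective f)
    {r : RSel} (hr : r = .sub ∨ r = .eq) {S F : Set α} :
    r.holds (f '' S) (f '' F) ↔ r.holds S F := by
  rcases hr with rfl | rfl
  exacts [image_subset_image_iff hf, (image_injective.mpr hf).eq_iff]

theorem _root_.RSel.holds.subset {α : Type} {r : RSel} (hr : r = .sub ∨ r = .eq)
    {S F : Set α} (h : r.holds S F) : S ⊆ F := by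
  rcases hr with rfl | rfl
  exacts [h, Eq.subset h]

-- An `abbrev`, so that `M.completion.Q` and `M.Q ⊕ Bool` unify when rewriting.
abbrev completion (M : OFA A) : OFA A where
  Q := M.Q ⊕ Bool
  T
    | .inl p, a, .inl q => M.T p a q
    | .inl p, a, .inr b => b = false ∧ ∀ q, ¬ M.T p a q
    | .inr _, _, .inr b => b = true
    | .inr _, _, .inl _ => False
  q0 := .inl M.q0
  Acc := image Sum.inl '' M.Acc

theorem Deterministic.completion {M : OFA A} (h : M.Deterministic) :
    M.completion.Deterministic := by
  rintro (p | _) a (q | b) (q' | b') hq hq' <;> simp only at hq hq'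
  · exact congrArg _ (h p a q q' hq hq')
  · exact (hq'.2 q hq).elim
  · exact (hq.2 q' hq').elim
  · rw [hq.1, hq'.1]
  · rw [hq, hq']

theorem completion_complete (M : OFA A) : M.completion.Complete := by
  rintro (p | _) a
  · by_cases h : ∃ q, M.T p a q
    · obtain ⟨q, hq⟩ := h
      exact ⟨.inl q, hq⟩
    · exact ⟨.inr false, rfl, not_exists.mp h⟩
  · exact ⟨.inr true, rfl⟩

theorem initPath_completion_comp_inl_iff {M : OFA A} {p : ℕ → M.Q} {x : ℕ → A} :
    M.completion.InitPath (Sum.inl ∘ p) x ↔ M.InitPath p x :=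
  ⟨fun h => ⟨Sum.inl_injective h.1, h.2⟩, fun h => ⟨congrArg _ h.1, h.2⟩⟩

theorem finSet_completion_comp_inl (M : OFA A) (p : ℕ → M.Q) :
    M.completion.finSet (Sum.inl ∘ p) = Sum.inl '' M.finSet p :=
  finSet_comp (N := M.completion) Sum.inl_injective p

theorem completion_T_inr {M : OFA A} {b : Bool} {a : A} {q : M.completion.Q}
    (h : M.completion.T (.inr b) a q) : q = .inr true := by
  cases q with
  | inl => exact h.elim
  | inr => exact congrArg _ h

section CompletionPath

variable {M : OFA A} {p : ℕ → M.completion.Q} {x : ℕ → A}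

theorem completion_eq_inr_true_of_lt (hp : ∀ i, M.completion.T (p i) (x i) (p (i + 1)))
    {i j : ℕ} {b : Bool} (hi : p i = .inr b) (hij : i < j) : p j = .inr true := by
  induction j, hij using Nat.le_induction with
  | base => exact completion_T_inr (hi ▸ hp i)
  | succ j _ ih => exact completion_T_inr (ih ▸ hp j)

theorem completion_exists_inr_false (hp : M.completion.InitPath p x) {j : ℕ} {b : Bool}
    (hj : p j = .inr b) : ∃ i, 0 < i ∧ p i = .inr false := by
  induction j generalizing b with
  | zero =>
    rw [hp.1] at hj
    cases hj
  | succ j ih =>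
    cases hpj : p j with
    | inl q =>
      have h := hp.2 j
      rw [hpj, hj] at h
      exact ⟨j + 1, j.succ_pos, h.1 ▸ hj⟩
    | inr b' => exact ih hpj

theorem completion_inr_false_mem_finSet (hp : M.completion.InitPath p x) {j : ℕ} {b : Bool}
    (hj : p j = .inr b) : (.inr false : M.completion.Q) ∈ M.completion.finSet p := by
  obtain ⟨i, hi, hpi⟩ := completion_exists_inr_false hp hj
  refine ⟨⟨i, hi, hpi⟩, fun hinf => ?_⟩
  obtain ⟨k, hk, hpk⟩ := hinf (i + 1)
  have := completion_eq_inr_true_of_lt hp.2 hpi (Nat.lt_of_succ_le hk)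
  rw [hpk] at this
  exact Bool.false_ne_true (Sum.inr_injective this)

end CompletionPath

theorem lang_completion_fin (M : OFA A) {r : RSel} (hr : r = .sub ∨ r = .eq) :
    M.completion.Lang .fin r = M.Lang .fin r := by
  ext x
  constructor
  · rintro ⟨p, hp, _, ⟨F, hF, rfl⟩, hacc⟩
    have hinl : ∀ i, ∃ q, p i = .inl q := fun i => by
      cases hpi : p i with
      | inl q => exact ⟨q, rfl⟩
      | inr b =>
        obtain ⟨_, -, h⟩ := hacc.subset hr (completion_inr_false_mem_finSet hp hpi)
        cases h
    choose q hq using hinl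
    obtain rfl : p = Sum.inl ∘ q := funext hq
    refine ⟨q, initPath_completion_comp_inl_iff.mp hp, F, hF, ?_⟩
    rwa [csel, finSet_completion_comp_inl, RSel.holds_image_iff Sum.inl_injective hr] at hacc
  · rintro ⟨p, hp, F, hF, hacc⟩
    refine ⟨Sum.inl ∘ p, initPath_completion_comp_inl_iff.mpr hp, _, mem_image_of_mem _ hF, ?_⟩
    rwa [csel, finSet_completion_comp_inl, RSel.holds_image_iff Sum.inl_injective hr]

end OFA

theorem autClass_eq_of_forall_exists {A : Type} {P P' : OFA A → Prop}
    {L : OFA A → Set (ℕ → A)} (hP : ∀ M, P' M → P M) (hL : ∀ M, P M → ∃ N, P' N ∧ L N = L M) :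
    AutClass A P L = AutClass A P' L := by
  ext X
  constructor
  · rintro ⟨M, hM, rfl⟩
    exact hL M hM
  · rintro ⟨M, hM, rfl⟩
    exact ⟨M, hP M hM, rfl⟩

theorem stmt_17_general (A : Type) :
    AutClass A OFA.Deterministic (fun M => M.Lang CSel.fin RSel.sub) = AutClass A (fun M : OFA A => M.Deterministic ∧ M.Complete) (fun M => M.Lang CSel.fin RSel.sub) ∧
    AutClass A (fun _ : OFA A => True) (fun M => M.Lang CSel.fin RSel.sub) = AutClass A OFA.Complete (fun M => M.Lang CSel.fin RSel.sub) ∧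
    AutClass A OFA.Deterministic (fun M => M.Lang CSel.fin RSel.eq) = AutClass A (fun M : OFA A => M.Deterministic ∧ M.Complete) (fun M => M.Lang CSel.fin RSel.eq) ∧
    AutClass A (fun _ : OFA A => True) (fun M => M.Lang CSel.fin RSel.eq) = AutClass A OFA.Complete (fun M => M.Lang CSel.fin RSel.eq) := by
  have deterministic {r : RSel} (hr : r = .sub ∨ r = .eq) :
      AutClass A OFA.Deterministic (fun M => M.Lang .fin r) =
        AutClass A (fun M : OFA A => M.Deterministic ∧ M.Complete) (fun M => M.Lang .fin r) :=
    autClass_eq_of_forall_exists (fun _ h => h.1) fun M hM =>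
      ⟨M.completion, ⟨hM.completion, M.completion_complete⟩, M.lang_completion_fin hr⟩
  have nondeterministic {r : RSel} (hr : r = .sub ∨ r = .eq) :
      AutClass A (fun _ : OFA A => True) (fun M => M.Lang .fin r) =
        AutClass A OFA.Complete (fun M => M.Lang .fin r) :=
    autClass_eq_of_forall_exists (fun _ _ => trivial) fun M _ =>
      ⟨M.completion, M.completion_complete, M.lang_completion_fin hr⟩
  exact ⟨deterministic (.inl rfl), nondeterministic (.inl rfl), deterministic (.inr rfl),
    nondeterministic (.inr rfl)⟩

theorem stmt_17 (A : Type) [Fintype A] :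
    AutClass A OFA.Deterministic (fun M => M.Lang CSel.fin RSel.sub) = AutClass A (fun M : OFA A => M.Deterministic ∧ M.Complete) (fun M => M.Lang CSel.fin RSel.sub) ∧
    AutClass A (fun _ : OFA A => True) (fun M => M.Lang CSel.fin RSel.sub) = AutClass A OFA.Complete (fun M => M.Lang CSel.fin RSel.sub) ∧
    AutClass A OFA.Deterministic (fun M => M.Lang CSel.fin RSel.eq) = AutClass A (fun M : OFA A => M.Deterministic ∧ M.Complete) (fun M => M.Lang CSel.fin RSel.eq) ∧
    AutClass A (fun _ : OFA A => True) (fun M => M.Lang CSel.fin RSel.eq) = AutClass A OFA.Complete (fun M => M.Lang CSel.fin RSel.eq) :=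
  stmt_17_general A
end
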